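/- Let C be a conjugation on H and let T ∈ S_C. Then the following are equivalent: (i) C*(T) ⊆ S_C, where C*(T) denotes the smallest norm-closed star-subalgebra of B(H) containing T and the identity operator I; (ii) |T| ∈ S_C, where |T| = (T*T)^{1/2} is the positive part in the polar decomposition; (iii) T is normal, i.e., T*T = TT*. -/

import Mathlib

def IsConjugation {H : Type*} [NormedAddCommGroup H] [InnerProductSpace ℂ H]
    (C : H → H) : Prop :=
  (∀ x y, C (x + y) = C x + C y) ∧
  (∀ (a : ℂ) (x : H), C (a • x) = (starRingEnd ℂ a) • C x) ∧
  (∀ x, C (C x) = x) ∧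
  (∀ x y : H, (inner ℂ (C x) (C y) : ℂ) = inner ℂ y x)

/-- The set `S_C` of `C`-symmetric bounded operators: `C T C = T*`. -/
def SC {H : Type*} [NormedAddCommGroup H] [InnerProductSpace ℂ H] [CompleteSpace H]
    (C : H → H) : Set (H →L[ℂ] H) :=
  {T | ∀ x : H, C (T (C x)) = ContinuousLinearMap.adjoint T x}

/-- The Jordan product `A ∘ B = (AB + BA)/2`. -/
noncomputable def jmul {H : Type*} [NormedAddCommGroup H] [InnerProductSpace ℂ H]
    [CompleteSpace H] (A B : H →L[ℂ] H) : H →L[ℂ] H :=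
  (2 : ℂ)⁻¹ • (A * B + B * A)

/-! For `T ∈ S_C`, conjugation by `C` carries `T*T` to `TT*`; as `T*T` is selfadjoint, it lies in
`S_C` exactly when `T` is normal. `S_C` is a closed selfadjoint subspace containing `I` and closed
under products of commuting operators. Hence (iii) ⇒ (i), because `C*(T)` is commutative for normal
`T`; (i) ⇒ (ii), because `|T| = √(T*T)` lies in `C*(T)`; and (ii) ⇒ (iii), because
`T*T = |T|²` then lies in `S_C`. -/

open ContinuousLinearMap

namespace IsConjugation

variable {H : Type*} [NormedAddCommGroup H] [InnerProductSpace ℂ H] {C : H → H}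

lemma map_add (hC : IsConjugation C) (x y : H) : C (x + y) = C x + C y := hC.1 x y

lemma map_smul (hC : IsConjugation C) (a : ℂ) (x : H) : C (a • x) = starRingEnd ℂ a • C x :=
  hC.2.1 a x

lemma apply_apply (hC : IsConjugation C) (x : H) : C (C x) = x := hC.2.2.1 x

lemma inner_map_map (hC : IsConjugation C) (x y : H) : inner ℂ (C x) (C y) = inner ℂ y x :=
  hC.2.2.2 x y

lemma map_sub (hC : IsConjugation C) (x y : H) : C (x - y) = C x - C y := by
  rw [eq_sub_iff_add_eq, ← hC.map_add, sub_add_cancel]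

lemma norm_map (hC : IsConjugation C) (x : H) : ‖C x‖ = ‖x‖ := by
  rw [norm_eq_sqrt_re_inner (𝕜 := ℂ), norm_eq_sqrt_re_inner (𝕜 := ℂ) x, hC.inner_map_map]

lemma isometry (hC : IsConjugation C) : Isometry C :=
  Isometry.of_dist_eq fun x y => by rw [dist_eq_norm, dist_eq_norm, ← hC.map_sub, hC.norm_map]

end IsConjugation

section SC

variable {H : Type*} [NormedAddCommGroup H] [InnerProductSpace ℂ H] [CompleteSpace H]
  {C : H → H} {A B T : H →L[ℂ] H}

lemma apply_conj_of_mem_SC (hC : IsConjugation C) (hA : A ∈ SC C) (x : H) :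
    A (C x) = C (adjoint A x) := by
  rw [← hA x, hC.apply_apply]

lemma star_mem_SC (hC : IsConjugation C) (hA : A ∈ SC C) : star A ∈ SC C := fun x => by
  rw [star_eq_adjoint, adjoint_adjoint, ← hA (C x)]
  simp only [hC.apply_apply]

lemma smul_one_mem_SC (hC : IsConjugation C) (a : ℂ) : a • (1 : H →L[ℂ] H) ∈ SC C := fun x => by
  rw [← star_eq_adjoint, star_smul, star_one]
  simp only [smul_apply, one_apply_eq_self, hC.map_smul, hC.apply_apply, starRingEnd_apply]

lemma add_mem_SC (hC : IsConjugation C) (hA : A ∈ SC C) (hB : B ∈ SC C) : A + B ∈ SC C :=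
  fun x => by rw [map_add, add_apply, add_apply, hC.map_add, hA x, hB x]

lemma mul_mem_SC_of_commute (hC : IsConjugation C) (hA : A ∈ SC C) (hB : B ∈ SC C)
    (hAB : Commute A B) : A * B ∈ SC C := fun x => by
  rw [mul_apply_eq_comp, apply_conj_of_mem_SC hC hB, hA, hAB.eq, ← star_eq_adjoint (B * A),
    star_mul, star_eq_adjoint, star_eq_adjoint]
  rfl

lemma isClosed_SC (hC : IsConjugation C) : IsClosed (SC C) := by
  simp only [SC, Set.ofPred_forall]
  exact isClosed_iInter fun x => isClosed_eq
    (hC.isometry.continuous.comp ((apply ℂ H (C x)).continuous))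
    ((apply ℂ H x).continuous.comp (adjoint (E := H) (F := H)).continuous)

lemma conj_star_mul_self_conj_eq_mul_star (hC : IsConjugation C) (hT : T ∈ SC C) (x : H) :
    C ((star T * T) (C x)) = (T * star T) x := by
  rw [mul_apply_eq_comp, apply_conj_of_mem_SC hC hT, star_mem_SC hC hT, star_eq_adjoint,
    adjoint_adjoint]
  rfl

lemma star_mul_self_eq_of_mem_SC (hC : IsConjugation C) (hT : T ∈ SC C)
    (hTT : star T * T ∈ SC C) : star T * T = T * star T := by
  ext x
  have hsa : adjoint (star T * T) = star T * T := (IsSelfAdjoint.star_mul_self T).adjoint_eq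
  rw [← conj_star_mul_self_conj_eq_mul_star hC hT, hTT x, hsa]

lemma elemental_subset_SC (hC : IsConjugation C) (hT : T ∈ SC C) [IsStarNormal T] :
    (StarAlgebra.elemental ℂ T : Set (H →L[ℂ] H)) ⊆ SC C := by
  intro A hA
  induction hA using StarAlgebra.elemental.induction_on with
  | self => exact hT
  | star_self => exact star_mem_SC hC hT
  | algebraMap r =>
    exact (Algebra.algebraMap_eq_smul_one (A := H →L[ℂ] H) r) ▸ smul_one_mem_SC hC r
  | add u _ v _ hu hv => exact add_mem_SC hC hu hv
  | mul u hu v hv hu' hv' =>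
    exact mul_mem_SC_of_commute hC hu' hv' <|
      congrArg Subtype.val (mul_comm (⟨u, hu⟩ : StarAlgebra.elemental ℂ T) ⟨v, hv⟩)
  | closure s _ hs v hv => exact closure_minimal hs (isClosed_SC hC) hv

end SC

lemma CFC.sqrt_mem {A : Type*} [CStarAlgebra A] [PartialOrder A] [StarOrderedRing A]
    {S : StarSubalgebra ℂ A} (hS : IsClosed (S : Set A)) {a : A} (ha : a ∈ S) (ha₀ : 0 ≤ a) :
    CFC.sqrt a ∈ S := by
  rw [CFC.sqrt, cfcₙ_nnreal_eq_real _ _ ha₀]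
  exact cfcₙ_mem (𝕜' := ℂ) (hs := hS) _ ha

theorem stmt11_general {H : Type*} [NormedAddCommGroup H] [InnerProductSpace ℂ H] [CompleteSpace H]
    (C : H → H) (hC : IsConjugation C) (T : H →L[ℂ] H) (hT : T ∈ SC C) :
    List.TFAE [
      ∀ A : H →L[ℂ] H,
        (∀ S : StarSubalgebra ℂ (H →L[ℂ] H), IsClosed (S : Set (H →L[ℂ] H)) → T ∈ S → A ∈ S) →
        A ∈ SC C,
      ∀ R : H →L[ℂ] H, R.IsPositive → R * R = star T * T → R ∈ SC C,
      star T * T = T * star T] := by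
  tfae_have 1 → 2 := by
    intro h R hR hRR
    have hR₀ : 0 ≤ R := (nonneg_iff_isPositive R).mpr hR
    refine h R fun S hS hTS => ?_
    rw [← CFC.sqrt_unique hRR hR₀]
    exact CFC.sqrt_mem hS (mul_mem (star_mem hTS) hTS) (star_mul_self_nonneg T)
  tfae_have 2 → 3 := by
    intro h
    have hR := h (CFC.sqrt (star T * T)) ((nonneg_iff_isPositive _).mp (CFC.sqrt_nonneg _))
      (CFC.sqrt_mul_sqrt_self _ (star_mul_self_nonneg T))
    apply star_mul_self_eq_of_mem_SC hC hT
    rw [← CFC.sqrt_mul_sqrt_self _ (star_mul_self_nonneg T)]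
    exact mul_mem_SC_of_commute hC hR hR (Commute.refl _)
  tfae_have 3 → 1 := by
    intro h A hA
    have : IsStarNormal T := ⟨h⟩
    exact elemental_subset_SC hC hT <|
      hA _ (StarAlgebra.elemental.isClosed ℂ T) (StarAlgebra.elemental.self_mem ℂ T)
  tfae_finish

/-- For `T ∈ S_C`, TFAE: (i) the smallest norm-closed star-subalgebra of `B(H)`
containing `T` and `I` is contained in `S_C`; (ii) `|T| ∈ S_C` (phrased via the
unique positive square root of `T*T`); (iii) `T` is normal. -/
theorem stmt11 {H : Type*} [NormedAddCommGroup H] [InnerProductSpace ℂ H] [CompleteSpace H]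
    [TopologicalSpace.SeparableSpace H] (hdim : ¬ FiniteDimensional ℂ H)
    (C : H → H) (hC : IsConjugation C) (T : H →L[ℂ] H) (hT : T ∈ SC C) :
    List.TFAE [
      ∀ A : H →L[ℂ] H,
        (∀ S : StarSubalgebra ℂ (H →L[ℂ] H), IsClosed (S : Set (H →L[ℂ] H)) → T ∈ S → A ∈ S) →
        A ∈ SC C,
      ∀ R : H →L[ℂ] H, R.IsPositive → R * R = star T * T → R ∈ SC C,
      star T * T = T * star T] :=
  stmt11_general C hC T hT
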